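/- arXiv:2207.01069 — 3 statements merged into one kernel-verified Lean document; each statement's English description precedes it below -/
import Mathlib

section
/- Let α, β, δ, γ be linear maps on real sequences such that the matrix operator T(ω,x) = (αω + βx, δω + γx) is bounded on Z₂. Then γ + δ∘KP is bounded from ℓ² to ℓ²: there is a constant C′ > 0 such that for every y ∈ ℓ², γy + δ(KP y) ∈ ℓ² and ‖γy + δ(KP y)‖₂ ≤ C′‖y‖₂. -/
/-!
The graph of the Kalton–Peck map sits isometrically inside Z₂: for `y ∈ ℓ²` the pair
`(KP y, y)` lies in Z₂ with quasinorm `‖y‖₂`. Applying `T` to it, the second coordinate of the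
image is `γ y + δ (KP y)`, and the second coordinate of a point of Z₂ is controlled by its
quasinorm.
-/

open scoped BigOperators

noncomputable section

/-- Real sequences. -/
abbrev RSeq : Type := ℕ → ℝ

/-- Membership in ℓ². -/
def memL2 (x : RSeq) : Prop := Summable (fun n => (x n) ^ 2)

/-- The ℓ² norm. -/
noncomputable def l2norm (x : RSeq) : ℝ := Real.sqrt (∑' n, (x n) ^ 2)

/-- The Kalton–Peck map, defined coordinatewise.  (In Lean, `Real.log 0 = 0` and
division by zero is zero, so the conventions `0·log 0 = 0` and `KP 0 = 0` hold.) -/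
noncomputable def KP (x : RSeq) : RSeq := fun n => 2 * x n * Real.log (|x n| / l2norm x)

/-- Membership in the Kalton–Peck space Z₂. -/
def memZ2 (u : RSeq × RSeq) : Prop := memL2 u.2 ∧ memL2 (u.1 - KP u.2)

/-- The Z₂ quasinorm. -/
noncomputable def Z2norm (u : RSeq × RSeq) : ℝ := l2norm (u.1 - KP u.2) + l2norm u.2

/-- A map on pairs of sequences is bounded on Z₂. -/
def BoundedOnZ2 (T : RSeq × RSeq → RSeq × RSeq) : Prop :=
  (∀ u, memZ2 u → memZ2 (T u)) ∧ ∃ C : ℝ, ∀ u, memZ2 u → Z2norm (T u) ≤ C * Z2norm u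

/-- The matrix operator associated to four linear maps on sequences. -/
def matOp (α β δ γ : RSeq →ₗ[ℝ] RSeq) : RSeq × RSeq → RSeq × RSeq :=
  fun u => (α u.1 + β u.2, δ u.1 + γ u.2)

/-- Membership in the Orlicz space ℓ_f = Dom KP. -/
def memLf (x : RSeq) : Prop := memL2 x ∧ memL2 (KP x)

/-- The ℓ_f quasinorm. -/
noncomputable def lfNorm (x : RSeq) : ℝ := l2norm (KP x) + l2norm x

/-- Membership in ℓ_f* = Ran KP. -/
def memLfStar (ω : RSeq) : Prop := ∃ x : RSeq, memL2 x ∧ memL2 (ω - KP x)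

/-- The ℓ_f* quasinorm. -/
noncomputable def lfStarNorm (ω : RSeq) : ℝ :=
  sInf {r : ℝ | ∃ x : RSeq, memL2 x ∧ memL2 (ω - KP x) ∧ r = l2norm (ω - KP x) + l2norm x}

/-- A bounded map on Z₂ is strictly singular if every linear subspace of Z₂ on which it is
bounded below is finite dimensional. -/
def StrictlySingular (T : RSeq × RSeq → RSeq × RSeq) : Prop :=
  ∀ V : Submodule ℝ (RSeq × RSeq), (∀ v ∈ V, memZ2 v) →
    (∃ c > 0, ∀ v ∈ V, c * Z2norm v ≤ Z2norm (T v)) → FiniteDimensional ℝ V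

/-- A set of sequences is totally bounded (relatively compact) for the ℓ² norm. -/
def l2TotallyBounded (A : Set RSeq) : Prop :=
  ∀ ε > 0, ∃ S : Set RSeq, S.Finite ∧
    ∀ a ∈ A, ∃ s ∈ S, memL2 (a - s) ∧ l2norm (a - s) < ε

/-- A map on Z₂ is compact if the image of the unit ball is totally bounded for the
Z₂ quasinorm. -/
def CompactOnZ2 (T : RSeq × RSeq → RSeq × RSeq) : Prop :=
  ∀ ε > 0, ∃ S : Set (RSeq × RSeq), S.Finite ∧
    ∀ u, memZ2 u → Z2norm u ≤ 1 → ∃ s ∈ S, memZ2 (T u - s) ∧ Z2norm (T u - s) < ε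

lemma l2norm_nonneg (x : RSeq) : 0 ≤ l2norm x :=
  Real.sqrt_nonneg _

@[simp]
lemma l2norm_zero : l2norm 0 = 0 := by
  simp [l2norm]

lemma memL2_zero : memL2 0 := by
  simp [memL2, summable_zero]

lemma l2norm_snd_le_Z2norm (u : RSeq × RSeq) : l2norm u.2 ≤ Z2norm u :=
  le_add_of_nonneg_left (l2norm_nonneg _)

lemma memZ2_KP_graph {y : RSeq} (hy : memL2 y) : memZ2 (KP y, y) := by
  refine ⟨hy, ?_⟩
  rw [sub_self]
  exact memL2_zero

lemma Z2norm_KP_graph (y : RSeq) : Z2norm (KP y, y) = l2norm y := by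
  simp [Z2norm]

lemma matOp_KP_graph_snd (α β δ γ : RSeq →ₗ[ℝ] RSeq) (y : RSeq) :
    (matOp α β δ γ (KP y, y)).2 = γ y + δ (KP y) :=
  add_comm _ _

/-- If the matrix operator is bounded on Z₂, then γ + δ∘KP is bounded from
ℓ² to ℓ². -/
theorem stmt_2 (α β δ γ : RSeq →ₗ[ℝ] RSeq)
    (hT : BoundedOnZ2 (matOp α β δ γ)) :
    ∃ C > (0 : ℝ), ∀ y : RSeq, memL2 y →
      memL2 (γ y + δ (KP y)) ∧ l2norm (γ y + δ (KP y)) ≤ C * l2norm y := by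
  obtain ⟨hmem, C, hC⟩ := hT
  refine ⟨max C 1, lt_max_of_lt_right one_pos, fun y hy => ?_⟩
  have hu := memZ2_KP_graph hy
  rw [← matOp_KP_graph_snd α β δ γ y]
  refine ⟨(hmem _ hu).1, ?_⟩
  calc l2norm (matOp α β δ γ (KP y, y)).2
      ≤ Z2norm (matOp α β δ γ (KP y, y)) := l2norm_snd_le_Z2norm _
    _ ≤ C * l2norm y := Z2norm_KP_graph y ▸ hC _ hu
    _ ≤ max C 1 * l2norm y := by gcongr; exacts [l2norm_nonneg y, le_max_left C 1]
end
end

section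
/- Let α, β, δ, γ be linear maps on real sequences such that the matrix operator T(ω,x) = (αω + βx, δω + γx) is bounded on Z₂. Then α∘KP + β − KP∘(δ∘KP + γ) is bounded from ℓ² to ℓ²: there is a constant C′ > 0 such that for every y ∈ ℓ², δ(KP y) + γy ∈ ℓ², α(KP y) + βy − KP(δ(KP y) + γy) ∈ ℓ², and ‖α(KP y) + βy − KP(δ(KP y) + γy)‖₂ ≤ C′‖y‖₂. -/
open scoped BigOperators

noncomputable section

lemma Z2norm_nonneg (u : RSeq × RSeq) : 0 ≤ Z2norm u :=
  add_nonneg (l2norm_nonneg _) (l2norm_nonneg _)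

lemma l2norm_fst_sub_KP_le_Z2norm (u : RSeq × RSeq) : l2norm (u.1 - KP u.2) ≤ Z2norm u :=
  le_add_of_nonneg_right (l2norm_nonneg _)

lemma BoundedOnZ2.exists_pos_bound {T : RSeq × RSeq → RSeq × RSeq} (hT : BoundedOnZ2 T) :
    ∃ C > (0 : ℝ), ∀ u, memZ2 u → Z2norm (T u) ≤ C * Z2norm u := by
  obtain ⟨-, C, hC⟩ := hT
  refine ⟨max C 1, lt_max_of_lt_right one_pos, fun u hu => ?_⟩
  exact (hC u hu).trans (mul_le_mul_of_nonneg_right (le_max_left _ _) (Z2norm_nonneg u))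

/-- If the matrix operator is bounded on Z₂, then
α∘KP + β − KP∘(δ∘KP + γ) is bounded from ℓ² to ℓ². -/
theorem stmt_5 (α β δ γ : RSeq →ₗ[ℝ] RSeq)
    (hT : BoundedOnZ2 (matOp α β δ γ)) :
    ∃ C > (0 : ℝ), ∀ y : RSeq, memL2 y →
      memL2 (δ (KP y) + γ y) ∧
      memL2 (α (KP y) + β y - KP (δ (KP y) + γ y)) ∧
      l2norm (α (KP y) + β y - KP (δ (KP y) + γ y)) ≤ C * l2norm y := by
  obtain ⟨C, hC_pos, hC⟩ := hT.exists_pos_bound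
  refine ⟨C, hC_pos, fun y hy => ?_⟩
  have hu := memZ2_KP_graph hy
  obtain ⟨hsnd, hdefect⟩ := hT.1 _ hu
  refine ⟨hsnd, hdefect, ?_⟩
  calc l2norm (α (KP y) + β y - KP (δ (KP y) + γ y))
      ≤ Z2norm (matOp α β δ γ (KP y, y)) :=
        l2norm_fst_sub_KP_le_Z2norm (matOp α β δ γ (KP y, y))
    _ ≤ C * l2norm y := by simpa only [Z2norm_KP_graph] using hC _ hu
end
end

section
/- Let α, β, δ, γ be linear maps on real sequences such that the matrix operator T(ω,x) = (αω + βx, δω + γx) is bounded on Z₂, and suppose in addition that α restricts to a bounded operator on ℓ² (for every y ∈ ℓ², αy ∈ ℓ² and ‖αy‖₂ ≤ K‖y‖₂ for some constant K). Then δ is bounded from ℓ² to ℓ_f: there is C′ > 0 such that for every y ∈ ℓ², δy ∈ ℓ², KP(δy) ∈ ℓ², and ‖KP(δy)‖₂ + ‖δy‖₂ ≤ C′‖y‖₂. -/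
open scoped BigOperators

noncomputable section

/-! Testing `T` on `(y, 0)` gives `(α y, δ y) ∈ Z₂`, so `KP (δ y)` differs from `α y ∈ ℓ²` by an
`ℓ²` vector of norm at most `C ‖y‖₂`; the triangle inequality then bounds `‖KP (δ y)‖₂` by
`(K + C) ‖y‖₂`. -/

lemma memL2_iff_memℓp (x : RSeq) : memL2 x ↔ Memℓp x 2 := by
  rw [memℓp_gen_iff (by norm_num), memL2]
  norm_num

lemma l2norm_coe_lp (f : lp (fun _ : ℕ => ℝ) 2) : l2norm (f : RSeq) = ‖f‖ := by
  rw [lp.norm_eq_tsum_rpow (by norm_num), l2norm, Real.sqrt_eq_rpow]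
  norm_num

lemma memL2.sub {x y : RSeq} (hx : memL2 x) (hy : memL2 y) : memL2 (x - y) := by
  rw [memL2_iff_memℓp] at *
  exact hx.sub hy

lemma l2norm_sub_le {x y : RSeq} (hx : memL2 x) (hy : memL2 y) :
    l2norm (x - y) ≤ l2norm x + l2norm y := by
  rw [memL2_iff_memℓp] at hx hy
  have h := norm_sub_le (⟨x, hx⟩ : lp (fun _ : ℕ => ℝ) 2) ⟨y, hy⟩
  rwa [← l2norm_coe_lp, ← l2norm_coe_lp, ← l2norm_coe_lp] at h

lemma KP_zero : KP 0 = 0 := by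
  funext n
  simp [KP]

lemma memZ2_inl {y : RSeq} (hy : memL2 y) : memZ2 (y, 0) := by
  refine ⟨?_, ?_⟩
  · simp [memL2]
  · simpa [KP_zero] using hy

lemma Z2norm_inl (y : RSeq) : Z2norm (y, 0) = l2norm y := by
  simp [Z2norm, KP_zero, l2norm]

lemma matOp_inl (α β δ γ : RSeq →ₗ[ℝ] RSeq) (y : RSeq) :
    matOp α β δ γ (y, 0) = (α y, δ y) := by
  simp [matOp]

lemma memLf_of_memZ2 {ω x : RSeq} (hω : memL2 ω) (hu : memZ2 (ω, x)) : memLf x := by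
  refine ⟨hu.1, ?_⟩
  rw [← sub_sub_cancel ω (KP x)]
  exact hω.sub hu.2

lemma lfNorm_le_of_memZ2 {ω x : RSeq} (hω : memL2 ω) (hu : memZ2 (ω, x)) :
    lfNorm x ≤ l2norm ω + Z2norm (ω, x) := by
  have h := l2norm_sub_le hω hu.2
  rw [sub_sub_cancel] at h
  simp only [lfNorm, Z2norm]
  linarith

/-- If the matrix operator is bounded on Z₂ and α restricts to a bounded
operator on ℓ², then δ is bounded from ℓ² to ℓ_f. -/
theorem stmt_7 (α β δ γ : RSeq →ₗ[ℝ] RSeq)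
    (hT : BoundedOnZ2 (matOp α β δ γ))
    (hα : ∃ K : ℝ, ∀ y : RSeq, memL2 y → memL2 (α y) ∧ l2norm (α y) ≤ K * l2norm y) :
    ∃ C > (0 : ℝ), ∀ y : RSeq, memL2 y →
      memL2 (δ y) ∧ memL2 (KP (δ y)) ∧
      l2norm (KP (δ y)) + l2norm (δ y) ≤ C * l2norm y := by
  obtain ⟨K, hK⟩ := hα
  obtain ⟨hmaps, C, hC⟩ := hT
  refine ⟨|C| + |K| + 1, by positivity, fun y hy => ?_⟩
  have hu := memZ2_inl hy
  have hTu : memZ2 (α y, δ y) := matOp_inl α β δ γ y ▸ hmaps _ hu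
  have hTbound : Z2norm (α y, δ y) ≤ C * l2norm y := by
    simpa only [matOp_inl, Z2norm_inl] using hC _ hu
  obtain ⟨hαy, hαbound⟩ := hK y hy
  obtain ⟨hδy, hKPδy⟩ := memLf_of_memZ2 hαy hTu
  refine ⟨hδy, hKPδy, ?_⟩
  calc lfNorm (δ y) ≤ l2norm (α y) + Z2norm (α y, δ y) := lfNorm_le_of_memZ2 hαy hTu
    _ ≤ K * l2norm y + C * l2norm y := add_le_add hαbound hTbound
    _ ≤ (|C| + |K| + 1) * l2norm y := by
      nlinarith [le_abs_self K, le_abs_self C, l2norm_nonneg y]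
end
end
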